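/- Let A be an invertible linear map on ℝ^d and x ∈ ℝ^d a unit vector. Then for every k ≤ d − 1, the norm of the k-th exterior power of the differential of the spherization ˢA at x (restricted to the tangent space of the sphere) satisfies ‖Λ^k d(ˢA)_x‖ ≤ ‖Λ^k A‖ / ‖Ax‖^k. -/

import Mathlib

/-!
Writing `P` for the orthogonal projection onto `(Ax)ᗮ`, the differential is `‖Ax‖⁻¹ • P ∘ A`, so
for an orthonormal `k`-frame `v` the Gram determinant of its image is `‖Ax‖⁻²ᵏ` times that of
`P (A v)`. The Gram matrix of `A v` splits as the Gram matrix of `P (A v)` plus the rank-one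
matrix `c cᴴ`, `c i = ⟪A vᵢ, Ax⟫ / ‖Ax‖`, and by the matrix determinant lemma adding `c cᴴ` to a
positive semidefinite matrix cannot decrease its determinant.
-/

open scoped RealInnerProductSpace

/-- The operator norm of `Λ^k A` (Euclidean structure), as the supremum over orthonormal
`k`-tuples of the norms of the decomposable images. -/
noncomputable def lambdaNorm {d : ℕ}
    (A : EuclideanSpace ℝ (Fin d) →L[ℝ] EuclideanSpace ℝ (Fin d)) (k : ℕ) : ℝ :=
  sSup {t : ℝ | ∃ v : Fin k → EuclideanSpace ℝ (Fin d), Orthonormal ℝ v ∧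
    t = Real.sqrt ((Matrix.of (fun i j : Fin k => ⟪A (v i), A (v j)⟫)).det)}

/-- The differential of the spherization `ˢA(x) = Ax/‖Ax‖`:
`w ↦ P^⊥(Aw/‖Ax‖)`, `P^⊥` being the orthogonal projection along `Ax/‖Ax‖`. -/
noncomputable def sphDiff {d : ℕ}
    (A : EuclideanSpace ℝ (Fin d) ≃L[ℝ] EuclideanSpace ℝ (Fin d))
    (x w : EuclideanSpace ℝ (Fin d)) : EuclideanSpace ℝ (Fin d) :=
  (‖A x‖⁻¹ • A w) -
    ⟪(‖A x‖⁻¹ • A x : EuclideanSpace ℝ (Fin d)),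
      (‖A x‖⁻¹ • A w : EuclideanSpace ℝ (Fin d))⟫ • (‖A x‖⁻¹ • A x)

open Matrix
open scoped ComplexOrder InnerProductSpace

namespace Matrix

variable {n 𝕜 : Type*} [RCLike 𝕜]

theorem PosSemidef.det_le_det_add_vecMulVec [Fintype n] [DecidableEq n] {M : Matrix n n 𝕜}
    (hM : M.PosSemidef) (c : n → 𝕜) : M.det ≤ (M + vecMulVec c (star c)).det := by
  rcases eq_or_ne M.det 0 with hdet | hdet
  · rw [hdet]
    exact (hM.add (posSemidef_vecMulVec_self_star c)).det_nonneg
  · rw [vecMulVec_eq Unit, det_add_replicateCol_mul_replicateRow hdet.isUnit, det_unique (_ + _),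
      add_apply, one_apply_eq, Matrix.mul_assoc, ← replicateCol_mulVec,
      replicateRow_mul_replicateCol_apply]
    exact le_mul_of_one_le_right hM.det_nonneg
      (le_add_of_nonneg_right (hM.inv.dotProduct_mulVec_nonneg c))

variable {E : Type*} [NormedAddCommGroup E] [InnerProductSpace 𝕜 E]

theorem gram_eq_gram_starProjection_add_gram_starProjection_orthogonal (K : Submodule 𝕜 E)
    [K.HasOrthogonalProjection] (v : n → E) :
    gram 𝕜 v = gram 𝕜 (K.starProjection ∘ v) + gram 𝕜 (Kᗮ.starProjection ∘ v) := by
  ext i j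
  have hK (w w' : E) : ⟪K.starProjection w, Kᗮ.starProjection w'⟫_𝕜 = 0 :=
    Submodule.inner_right_of_mem_orthogonal (K.starProjection_apply_mem w)
      (Kᗮ.starProjection_apply_mem w')
  have hK' (w w' : E) : ⟪Kᗮ.starProjection w, K.starProjection w'⟫_𝕜 = 0 :=
    Submodule.inner_left_of_mem_orthogonal (K.starProjection_apply_mem w')
      (Kᗮ.starProjection_apply_mem w)
  conv_lhs => rw [gram_apply, ← K.starProjection_add_starProjection_orthogonal (v i),
    ← K.starProjection_add_starProjection_orthogonal (v j)]
  simp only [inner_add_left, inner_add_right, hK, hK', add_apply, gram_apply, Function.comp_apply]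
  ring

theorem gram_starProjection_singleton (a : E) (v : n → E) :
    gram 𝕜 ((𝕜 ∙ a).starProjection ∘ v) =
      vecMulVec (fun i => ⟪v i, a⟫_𝕜 / ‖a‖) (star fun i => ⟪v i, a⟫_𝕜 / ‖a‖) := by
  ext i j
  rw [gram_apply, Function.comp_apply, Function.comp_apply,
    Submodule.inner_starProjection_left_eq_right,
    Submodule.starProjection_eq_self_iff.mpr (Submodule.starProjection_apply_mem _ _),
    Submodule.starProjection_singleton, inner_smul_right]
  simp only [vecMulVec_apply, Pi.star_apply, star_div₀, RCLike.star_def, inner_conj_symm,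
    RCLike.conj_ofReal, RCLike.ofReal_pow]
  ring

theorem det_gram_starProjection_orthogonal_singleton_le [Fintype n] [DecidableEq n] (a : E)
    (v : n → E) : (gram 𝕜 ((𝕜 ∙ a)ᗮ.starProjection ∘ v)).det ≤ (gram 𝕜 v).det := by
  conv_rhs => rw [gram_eq_gram_starProjection_add_gram_starProjection_orthogonal (𝕜 ∙ a) v,
    add_comm, gram_starProjection_singleton]
  exact (posSemidef_gram 𝕜 _).det_le_det_add_vecMulVec _

section Real

variable {F : Type*} [Fintype n] [DecidableEq n] [NormedAddCommGroup F] [InnerProductSpace ℝ F]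

theorem det_gram_smul (c : ℝ) (v : n → F) :
    (gram ℝ (c • v)).det = (c ^ Fintype.card n) ^ 2 * (gram ℝ v).det := by
  have : gram ℝ (c • v) = c ^ 2 • gram ℝ v := by
    ext i j
    simp only [gram_apply, Pi.smul_apply, real_inner_smul_left, real_inner_smul_right, smul_apply,
      smul_eq_mul]
    ring
  rw [this, det_smul, ← pow_mul, ← pow_mul, mul_comm 2]

theorem det_gram_le_of_norm_le {v : n → F} {C : ℝ} (hC : ∀ i, ‖v i‖ ≤ C) :
    (gram ℝ v).det ≤ (Fintype.card n).factorial * (C * C) ^ Fintype.card n := by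
  have hentry (i j : n) : |gram ℝ v i j| ≤ C * C :=
    (abs_real_inner_le_norm _ _).trans
      (mul_le_mul (hC i) (hC j) (norm_nonneg _) ((norm_nonneg _).trans (hC i)))
  simpa using (le_abs_self _).trans (det_le (abv := AbsoluteValue.abs) hentry)

end Real

end Matrix

section Spherization

variable {d : ℕ}

theorem lambdaNorm_nonneg
    (A : EuclideanSpace ℝ (Fin d) →L[ℝ] EuclideanSpace ℝ (Fin d)) (k : ℕ) :
    0 ≤ lambdaNorm A k :=
  Real.sSup_nonneg <| by
    rintro _ ⟨v, -, rfl⟩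
    exact Real.sqrt_nonneg _

theorem sqrt_det_gram_le_lambdaNorm
    (A : EuclideanSpace ℝ (Fin d) →L[ℝ] EuclideanSpace ℝ (Fin d)) {k : ℕ}
    {v : Fin k → EuclideanSpace ℝ (Fin d)} (hv : Orthonormal ℝ v) :
    √(gram ℝ (A ∘ v)).det ≤ lambdaNorm A k := by
  refine le_csSup ⟨√((Fintype.card (Fin k)).factorial * (‖A‖ * ‖A‖) ^ Fintype.card (Fin k)), ?_⟩
    ⟨v, hv, rfl⟩
  rintro _ ⟨w, hw, rfl⟩
  gcongr
  exact det_gram_le_of_norm_le fun i => by simpa [hw.1 i] using A.le_opNorm (w i)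

/-- Both sides vanish when `A x = 0`, since `‖A x‖⁻¹ = 0` then. -/
theorem sphDiff_eq_smul_starProjection
    (A : EuclideanSpace ℝ (Fin d) ≃L[ℝ] EuclideanSpace ℝ (Fin d))
    (x w : EuclideanSpace ℝ (Fin d)) :
    sphDiff A x w = ‖A x‖⁻¹ • (ℝ ∙ A x)ᗮ.starProjection (A w) := by
  rw [sphDiff, Submodule.starProjection_orthogonal_val, Submodule.starProjection_singleton,
    real_inner_smul_left, real_inner_smul_right, smul_sub, smul_smul, smul_smul]
  congr 2
  simp only [RCLike.ofReal_real_eq_id, id]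
  ring

end Spherization

theorem sphDiff_lambdaNorm_le_general (d : ℕ)
    (A : EuclideanSpace ℝ (Fin d) ≃L[ℝ] EuclideanSpace ℝ (Fin d))
    (x : EuclideanSpace ℝ (Fin d)) (k : ℕ) :
    sSup {t : ℝ | ∃ v : Fin k → EuclideanSpace ℝ (Fin d), Orthonormal ℝ v ∧
        (∀ i, ⟪v i, x⟫ = 0) ∧
        t = Real.sqrt ((Matrix.of
          (fun i j : Fin k => ⟪sphDiff A x (v i), sphDiff A x (v j)⟫)).det)}
      ≤ lambdaNorm (A : EuclideanSpace ℝ (Fin d) →L[ℝ] EuclideanSpace ℝ (Fin d)) k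
          / ‖A x‖ ^ k := by
  refine Real.sSup_le ?_ (div_nonneg (lambdaNorm_nonneg _ k) (by positivity))
  rintro _ ⟨v, hv, -, rfl⟩
  have hsph : sphDiff A x ∘ v = ‖A x‖⁻¹ • ((ℝ ∙ A x)ᗮ.starProjection ∘ A ∘ v) :=
    funext fun i => sphDiff_eq_smul_starProjection A x (v i)
  calc √(gram ℝ (sphDiff A x ∘ v)).det
      = ‖A x‖⁻¹ ^ k * √(gram ℝ ((ℝ ∙ A x)ᗮ.starProjection ∘ A ∘ v)).det := by
        rw [hsph, det_gram_smul, Fintype.card_fin, Real.sqrt_mul (by positivity),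
          Real.sqrt_sq (by positivity)]
    _ ≤ ‖A x‖⁻¹ ^ k * √(gram ℝ (A ∘ v)).det := by
        gcongr
        exact det_gram_starProjection_orthogonal_singleton_le _ _
    _ ≤ ‖A x‖⁻¹ ^ k * lambdaNorm (A : EuclideanSpace ℝ (Fin d) →L[ℝ] _) k := by
        have hΛ := sqrt_det_gram_le_lambdaNorm (A : EuclideanSpace ℝ (Fin d) →L[ℝ] _) hv
        gcongr
        exact hΛ
    _ = _ := by rw [inv_pow, div_eq_inv_mul]

/-- For invertible `A` and a unit vector `x`, the `k`-th exterior power of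
the differential of the spherization `ˢA` at `x`, restricted to the tangent space of the sphere,
has norm at most `‖Λ^k A‖ / ‖Ax‖^k` for every `k ≤ d − 1`. -/
theorem sphDiff_lambdaNorm_le (d : ℕ)
    (A : EuclideanSpace ℝ (Fin d) ≃L[ℝ] EuclideanSpace ℝ (Fin d))
    (x : EuclideanSpace ℝ (Fin d)) (hx : ‖x‖ = 1) (k : ℕ) (hk : k ≤ d - 1) :
    sSup {t : ℝ | ∃ v : Fin k → EuclideanSpace ℝ (Fin d), Orthonormal ℝ v ∧
        (∀ i, ⟪v i, x⟫ = 0) ∧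
        t = Real.sqrt ((Matrix.of
          (fun i j : Fin k => ⟪sphDiff A x (v i), sphDiff A x (v j)⟫)).det)}
      ≤ lambdaNorm (A : EuclideanSpace ℝ (Fin d) →L[ℝ] EuclideanSpace ℝ (Fin d)) k
          / ‖A x‖ ^ k :=
  sphDiff_lambdaNorm_le_general d A x k
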